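/- arXiv:1409.3480 — 6 statements merged into one kernel-verified Lean document; each statement's English description precedes it below -/
import Mathlib

section
/- For 1 < p < ∞, 0 < w ≤ 1, n ∈ ℕ and 1 ≤ k ≤ n, the norm of the sum of the first k coordinate functionals in the dual of the space E = (ℝ^n, ‖·‖_{p,w}), where ‖(a_j)‖_{p,w} = max((∑|a_j|^p)^{1/p}, w(∑|a_j|²)^{1/2}), equals min(k^{1/p'}, k^{1/2}/w), where p' is the conjugate exponent of p. Equivalently, sup{∑_{j=1}^k a_j : ∑_{j=1}^k |a_j|^p ≤ 1 and w² ∑_{j=1}^k |a_j|² ≤ 1} = min(k^{1-1/p}, k^{1/2}/w). -/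
/-- Dual norm of the sum of the first `k` coordinate functionals in
`E = (ℝ^n, ‖·‖_{p,w})` equals `min (k^(1-1/p)) (k^(1/2)/w)`. -/
theorem stmt0 (p w : ℝ) (hp : 1 < p) (hw0 : 0 < w) (hw1 : w ≤ 1)
    (n k : ℕ) (hk : 1 ≤ k) (hkn : k ≤ n) :
    sSup {s : ℝ | ∃ a : Fin k → ℝ,
        (∑ j, |a j| ^ p ≤ 1) ∧ w ^ 2 * ∑ j, (a j) ^ 2 ≤ 1 ∧ s = ∑ j, a j}
      = min ((k : ℝ) ^ (1 - 1 / p)) ((k : ℝ) ^ ((1 : ℝ) / 2) / w) := by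
  have hk0 : (0:ℝ) < k := by exact_mod_cast hk
  have hk1 : (1:ℝ) ≤ k := by exact_mod_cast hk
  have hp0 : (0:ℝ) < p := lt_trans one_pos hp
  set M : ℝ := min ((k : ℝ) ^ (1 - 1 / p)) ((k : ℝ) ^ ((1 : ℝ) / 2) / w) with hM
  set c : ℝ := min ((k : ℝ) ^ (-(1 / p))) ((k : ℝ) ^ (-((1:ℝ) / 2)) / w) with hc
  have hc0 : 0 < c := lt_min (Real.rpow_pos_of_pos hk0 _)
    (div_pos (Real.rpow_pos_of_pos hk0 _) hw0)
  have hkc : (k : ℝ) * c = M := by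
    rw [hc, hM]
    rw [mul_min_of_nonneg _ _ hk0.le]
    congr 1
    · nth_rewrite 1 [← Real.rpow_one (k:ℝ)]
      rw [← Real.rpow_add hk0]
      norm_num
      ring_nf
    · rw [mul_div_assoc']
      congr 1
      nth_rewrite 1 [← Real.rpow_one (k:ℝ)]
      rw [← Real.rpow_add hk0]
      norm_num
  have hmem : M ∈ {s : ℝ | ∃ a : Fin k → ℝ,
        (∑ j, |a j| ^ p ≤ 1) ∧ w ^ 2 * ∑ j, (a j) ^ 2 ≤ 1 ∧ s = ∑ j, a j} := by
    refine ⟨fun _ => c, ?_, ?_, ?_⟩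
    · have h1 : |c| ^ p ≤ ((k:ℝ)^(-(1/p))) ^ p := by
        apply Real.rpow_le_rpow (abs_nonneg _) _ hp0.le
        rw [abs_of_pos hc0]; exact min_le_left _ _
      have h2 : ((k:ℝ)^(-(1/p))) ^ p = (k:ℝ)⁻¹ := by
        rw [← Real.rpow_mul hk0.le, show -(1/p)*p = -1 by field_simp]
        exact Real.rpow_neg_one _
      calc ∑ _j : Fin k, |c| ^ p ≤ ∑ _j : Fin k, ((k:ℝ)^(-(1/p))) ^ p :=
            Finset.sum_le_sum fun _ _ => h1
        _ = k * ((k:ℝ)⁻¹) := by rw [Finset.sum_const, Finset.card_univ, Fintype.card_fin,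
            nsmul_eq_mul, h2]
        _ = 1 := mul_inv_cancel₀ hk0.ne'
    · have h1 : c ^ 2 ≤ ((k:ℝ)^(-((1:ℝ)/2))/w) ^ 2 := by
        apply pow_le_pow_left₀ hc0.le (min_le_right _ _)
      have h2 : ((k:ℝ)^(-((1:ℝ)/2))/w) ^ 2 = (k:ℝ)⁻¹ / w^2 := by
        rw [div_pow]
        congr 1
        rw [← Real.rpow_natCast ((k:ℝ)^(-((1:ℝ)/2))) 2, ← Real.rpow_mul hk0.le]
        norm_num [Real.rpow_neg_one]
      calc w^2 * ∑ _j : Fin k, c ^ 2 ≤ w^2 * ∑ _j : Fin k, ((k:ℝ)⁻¹/w^2) := by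
            apply mul_le_mul_of_nonneg_left _ (sq_nonneg w)
            exact Finset.sum_le_sum fun _ _ => h2 ▸ h1
        _ = w^2 * (k * ((k:ℝ)⁻¹/w^2)) := by rw [Finset.sum_const, Finset.card_univ,
            Fintype.card_fin, nsmul_eq_mul]
        _ = 1 := by field_simp
    · rw [Finset.sum_const, Finset.card_univ, Fintype.card_fin, nsmul_eq_mul, hkc]
  have hub : ∀ s ∈ {s : ℝ | ∃ a : Fin k → ℝ,
        (∑ j, |a j| ^ p ≤ 1) ∧ w ^ 2 * ∑ j, (a j) ^ 2 ≤ 1 ∧ s = ∑ j, a j}, s ≤ M := by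
    rintro s ⟨a, h1, h2, rfl⟩
    have habs : ∑ j, a j ≤ ∑ j, |a j| := Finset.sum_le_sum fun j _ => le_abs_self _
    have hsum1 : ∑ j, |a j| ≤ (k:ℝ) ^ (1 - 1/p) := by
      have := Real.inner_le_weight_mul_Lp_of_nonneg (Finset.univ : Finset (Fin k)) hp.le
        (fun _ => 1) (fun j => |a j|) (fun _ => zero_le_one) (fun j => abs_nonneg _)
      simp only [one_mul, Finset.sum_const, Finset.card_univ, Fintype.card_fin,
        nsmul_eq_mul, mul_one] at this
      calc ∑ j, |a j| ≤ (k:ℝ) ^ (1 - p⁻¹) * (∑ j, |a j| ^ p) ^ p⁻¹ := this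
        _ ≤ (k:ℝ) ^ (1 - p⁻¹) * 1 := by
            apply mul_le_mul_of_nonneg_left _ (Real.rpow_nonneg hk0.le _)
            exact Real.rpow_le_one (Finset.sum_nonneg fun j _ =>
              Real.rpow_nonneg (abs_nonneg _) _) h1 (by positivity)
        _ = (k:ℝ) ^ (1 - 1/p) := by rw [mul_one, one_div]
    have hsum2 : ∑ j, |a j| ≤ (k:ℝ) ^ ((1:ℝ)/2) / w := by
      have := Real.inner_le_weight_mul_Lp_of_nonneg (Finset.univ : Finset (Fin k)) one_le_two
        (fun _ => 1) (fun j => |a j|) (fun _ => zero_le_one) (fun j => abs_nonneg _)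
      simp only [one_mul, Finset.sum_const, Finset.card_univ, Fintype.card_fin,
        nsmul_eq_mul, mul_one] at this
      have hsq : ∑ j, |a j| ^ (2:ℝ) = ∑ j, (a j)^2 := by
        refine Finset.sum_congr rfl fun j _ => ?_
        rw [show (2:ℝ) = ((2:ℕ):ℝ) by norm_num, Real.rpow_natCast]
        exact sq_abs _
      have h2' : ∑ j, (a j)^2 ≤ 1 / w^2 := by
        rw [le_div_iff₀ (by positivity)]
        linarith [h2]
      calc ∑ j, |a j| ≤ (k:ℝ) ^ (1 - (2:ℝ)⁻¹) * (∑ j, |a j| ^ (2:ℝ)) ^ (2:ℝ)⁻¹ := this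
        _ = (k:ℝ) ^ ((1:ℝ)/2) * (∑ j, (a j)^2) ^ (2:ℝ)⁻¹ := by rw [hsq]; norm_num
        _ ≤ (k:ℝ) ^ ((1:ℝ)/2) * (1/w^2) ^ (2:ℝ)⁻¹ := by
            apply mul_le_mul_of_nonneg_left _ (Real.rpow_nonneg hk0.le _)
            exact Real.rpow_le_rpow (Finset.sum_nonneg fun j _ => sq_nonneg _) h2' (by norm_num)
        _ = (k:ℝ) ^ ((1:ℝ)/2) / w := by
            have hww : (1/w^2) ^ ((2:ℝ)⁻¹) = 1/w := by
              rw [show (1/w^2) = (1/w)^(2:ℕ) by ring, ← Real.rpow_natCast (1/w) 2,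
                ← Real.rpow_mul (by positivity)]
              norm_num
            rw [hww, mul_one_div]
    exact le_min (habs.trans hsum1) (habs.trans hsum2)
  exact IsGreatest.csSup_eq ⟨hmem, hub⟩
end

section
/- Let 1 < p' < ∞ and 0 < w ≤ 1, and for real numbers a_1,…,a_k define two constraints: ∑|a_j|^{p'} ≤ 1 and w²∑|a_j|² ≤ 1. Then the maximum of ∑ a_j subject to both constraints is attained at a constant sequence a_1 = ⋯ = a_k = t, and equals min(k^{1-1/p'}, k^{1/2}/w). -/
lemma auxsum (k : ℕ) (hk : 0 < k) (p C : ℝ) (hp : 1 ≤ p) (hC : 0 ≤ C)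
    (a : Fin k → ℝ) (h : ∑ j, |a j| ^ p ≤ C) :
    ∑ j, a j ≤ (k : ℝ) ^ (1 - 1 / p) * C ^ (1 / p) := by
  have hk0 : (0:ℝ) < k := Nat.cast_pos.mpr hk
  have key := Real.arith_mean_le_rpow_mean (Finset.univ : Finset (Fin k))
    (fun _ => 1 / (k:ℝ)) (fun j => |a j|)
    (fun i _ => by positivity)
    (by simp [Finset.sum_const, Finset.card_univ]; field_simp)
    (fun i _ => abs_nonneg _) hp
  have h1 : ∑ j, (1/(k:ℝ)) * |a j| = (∑ j, |a j|) / k := by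
    rw [Finset.sum_div]; exact Finset.sum_congr rfl (fun i _ => by ring)
  have h2 : ∑ j, (1/(k:ℝ)) * |a j| ^ p = (∑ j, |a j| ^ p) / k := by
    rw [Finset.sum_div]; exact Finset.sum_congr rfl (fun i _ => by ring)
  rw [h1, h2] at key
  have hmono : ((∑ j, |a j| ^ p) / k) ^ (1/p) ≤ (C / k) ^ (1/p) := by
    apply Real.rpow_le_rpow (by positivity) (by gcongr) (by positivity)
  have hsum : ∑ j, a j ≤ ∑ j, |a j| := Finset.sum_le_sum (fun i _ => le_abs_self _)
  have : (∑ j, |a j|) / k ≤ (C / k) ^ (1/p) := key.trans hmono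
  have hfin : (k:ℝ) * (C / k) ^ (1/p) = (k : ℝ) ^ (1 - 1 / p) * C ^ (1 / p) := by
    rw [Real.div_rpow hC hk0.le, Real.rpow_sub hk0, Real.rpow_one]
    field_simp
  calc ∑ j, a j ≤ ∑ j, |a j| := hsum
    _ = k * ((∑ j, |a j|) / k) := by field_simp
    _ ≤ k * (C / k) ^ (1/p) := by
        exact mul_le_mul_of_nonneg_left this hk0.le
    _ = _ := hfin

/-- The maximum of `∑ a_j` under `∑ |a_j|^{p'} ≤ 1` and `w² ∑ a_j² ≤ 1` equals
`min (k^(1-1/p')) (√k / w)` and is attained at a constant sequence. -/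
theorem stmt1 (k : ℕ) (hk : 0 < k) (p' w : ℝ) (hp' : 1 < p')
    (hw0 : 0 < w) (hw1 : w ≤ 1) :
    IsGreatest {s : ℝ | ∃ a : Fin k → ℝ,
        (∑ j, |a j| ^ p' ≤ 1) ∧ w ^ 2 * ∑ j, (a j) ^ 2 ≤ 1 ∧ s = ∑ j, a j}
      (min ((k : ℝ) ^ (1 - 1 / p')) ((k : ℝ) ^ ((1 : ℝ) / 2) / w)) ∧
    ∃ t : ℝ, 0 ≤ t ∧ (k : ℝ) * t ^ p' ≤ 1 ∧ w ^ 2 * (k : ℝ) * t ^ 2 ≤ 1 ∧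
      (k : ℝ) * t = min ((k : ℝ) ^ (1 - 1 / p')) ((k : ℝ) ^ ((1 : ℝ) / 2) / w) := by
  have hk0 : (0:ℝ) < k := Nat.cast_pos.mpr hk
  have hp0 : (0:ℝ) < p' := lt_trans one_pos hp'
  set t1 : ℝ := (k:ℝ) ^ (-(1/p')) with ht1
  set t2 : ℝ := (k:ℝ) ^ (-((1:ℝ)/2)) / w with ht2
  have ht1pos : 0 < t1 := Real.rpow_pos_of_pos hk0 _
  have ht2pos : 0 < t2 := div_pos (Real.rpow_pos_of_pos hk0 _) hw0
  set t : ℝ := min t1 t2 with ht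
  have htpos : 0 < t := lt_min ht1pos ht2pos
  -- key computations
  have hkt1 : (k:ℝ) * t1 = (k:ℝ) ^ (1 - 1/p') := by
    rw [ht1, show (1 - 1/p') = 1 + -(1/p') by ring, Real.rpow_add hk0, Real.rpow_one]
  have hkt2 : (k:ℝ) * t2 = (k:ℝ) ^ ((1:ℝ)/2) / w := by
    rw [ht2, ← mul_div_assoc]
    congr 1
    nth_rewrite 1 [← Real.rpow_one (k:ℝ)]
    rw [← Real.rpow_add hk0]
    norm_num
  have ht1p : t1 ^ p' = ((k:ℝ))⁻¹ := by
    rw [ht1, ← Real.rpow_mul hk0.le, show -(1/p') * p' = -1 by field_simp, Real.rpow_neg_one]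
  have ht2sq : t2 ^ 2 = ((k:ℝ))⁻¹ / w ^ 2 := by
    rw [ht2, div_pow, ← Real.rpow_natCast ((k:ℝ) ^ (-((1:ℝ)/2))) 2, ← Real.rpow_mul hk0.le]
    norm_num [Real.rpow_neg_one]
  -- constraints for the constant sequence
  have hc1 : (k:ℝ) * t ^ p' ≤ 1 := by
    have : t ^ p' ≤ t1 ^ p' := Real.rpow_le_rpow htpos.le (min_le_left _ _) hp0.le
    calc (k:ℝ) * t ^ p' ≤ (k:ℝ) * t1 ^ p' := by gcongr
      _ = 1 := by rw [ht1p]; field_simp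
  have hc2 : w ^ 2 * ((k:ℝ) * t ^ 2) ≤ 1 := by
    have : t ^ 2 ≤ t2 ^ 2 := by
      apply pow_le_pow_left₀ htpos.le (min_le_right _ _)
    calc w ^ 2 * ((k:ℝ) * t ^ 2) ≤ w ^ 2 * ((k:ℝ) * t2 ^ 2) := by gcongr
      _ = 1 := by rw [ht2sq]; field_simp
  have hval : (k:ℝ) * t = min ((k : ℝ) ^ (1 - 1 / p')) ((k : ℝ) ^ ((1 : ℝ) / 2) / w) := by
    rw [ht, ← hkt1, ← hkt2]
    rcases le_total t1 t2 with h | h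
    · rw [min_eq_left h, min_eq_left (by gcongr)]
    · rw [min_eq_right h, min_eq_right (by gcongr)]
  refine ⟨⟨⟨fun _ => t, ?_, ?_, ?_⟩, ?_⟩, t, htpos.le, hc1, by linarith [hc2, mul_assoc (w^2) (k:ℝ) (t^2)], hval⟩
  · simpa [abs_of_nonneg htpos.le, Finset.card_univ] using hc1
  · simpa [Finset.card_univ, mul_assoc] using hc2
  · rw [Finset.sum_const, Finset.card_univ, Fintype.card_fin, nsmul_eq_mul, hval]
  · rintro s ⟨a, hA, hB, rfl⟩
    refine le_min ?_ ?_
    · have := auxsum k hk p' 1 hp'.le zero_le_one a hA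
      simpa using this
    · have hB' : ∑ j, |a j| ^ (2:ℝ) ≤ 1 / w ^ 2 := by
        have : ∑ j, |a j| ^ (2:ℝ) = ∑ j, (a j) ^ 2 := by
          refine Finset.sum_congr rfl fun i _ => ?_
          rw [show (2:ℝ) = ((2:ℕ):ℝ) by norm_num, Real.rpow_natCast, sq_abs]
        rw [this, le_div_iff₀ (by positivity), mul_comm]
        exact hB
      have := auxsum k hk 2 (1 / w ^ 2) one_le_two (by positivity) a hB'
      have hC : ((1:ℝ) / w ^ 2) ^ ((1:ℝ)/2) = 1 / w := by
        rw [show (1:ℝ)/w^2 = ((1:ℝ)/w)^(2:ℕ) by field_simp,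
          ← Real.rpow_natCast ((1:ℝ)/w) 2, ← Real.rpow_mul (by positivity)]
        norm_num
      calc ∑ j, a j ≤ (k:ℝ) ^ (1 - 1/(2:ℝ)) * ((1:ℝ)/w^2) ^ ((1:ℝ)/2) := by
            convert this using 3 <;> norm_num
        _ = (k:ℝ) ^ ((1:ℝ)/2) / w := by rw [hC]; norm_num; ring
end

section
/- Let 1 < p < 2, let v = (v_n) be a decreasing sequence in (0,1] with v_n ≥ n^{−η} where η = 1/p − 1/2, and suppose for each n the space F_n has a normalized 1-unconditional basis of length n whose lower fundamental function satisfies λ_{F_n}(k) ≥ (1/K)·min(k^{1/p}, k^{1/2}/v_n) for 1 ≤ k ≤ n. Then the ℓ_p-direct sum Y = (⊕_n F_n)_{ℓ_p} satisfies: for every k ≥ 1 and every set A of basis indices with |A| ≥ k, ‖∑_{(n,j)∈A} f_j^{(n)}‖_Y ≥ (1/(K√2)) · ℓ/v_ℓ, where ℓ = ⌊√(k/2)⌋ (with v_0 := 1). -/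
/-- Auxiliary rpow inequality: if `u ^ η ≤ L ^ (2/p - 1 - a)` then
`(u / (2 L²))^(1/p) * L^(1+a) ≤ u^(1/2)`. -/
lemma aux9 (p η a u L : ℝ) (hp1 : 1 < p) (hp2 : p < 2) (hη : η = 1 / p - 1 / 2)
    (hu : 1 ≤ u) (hL : 1 ≤ L) (h : u ^ η ≤ L ^ ((2:ℝ)/p - 1 - a)) :
    (u / (2 * L ^ (2:ℝ))) ^ (1/p) * L ^ (1 + a) ≤ u ^ ((1:ℝ)/2) := by
  have hp0 : 0 < p := by linarith
  have hu0 : (0:ℝ) < u := by linarith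
  have hL0 : (0:ℝ) < L := by linarith
  have hL2 : (0:ℝ) < L ^ (2:ℝ) := Real.rpow_pos_of_pos hL0 2
  have e1 : (u / (2 * L ^ (2:ℝ))) ^ (1/p) ≤ u ^ (1/p) / L ^ ((2:ℝ)/p) := by
    have h2 : u / (2 * L ^ (2:ℝ)) ≤ u / L ^ (2:ℝ) :=
      div_le_div_of_nonneg_left hu0.le hL2 (by linarith)
    calc (u / (2 * L ^ (2:ℝ))) ^ (1/p) ≤ (u / L ^ (2:ℝ)) ^ (1/p) :=
          Real.rpow_le_rpow (by positivity) h2 (by positivity)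
      _ = u ^ (1/p) / (L ^ (2:ℝ)) ^ (1/p) := Real.div_rpow hu0.le hL2.le _
      _ = u ^ (1/p) / L ^ ((2:ℝ)/p) := by
          rw [← Real.rpow_mul hL0.le]
          congr 1
          ring
  calc (u / (2 * L ^ (2:ℝ))) ^ (1/p) * L ^ (1 + a)
      ≤ (u ^ (1/p) / L ^ ((2:ℝ)/p)) * L ^ (1 + a) := by
        apply mul_le_mul_of_nonneg_right e1 (Real.rpow_nonneg hL0.le _)
    _ = u ^ ((1:ℝ)/2) * (u ^ η * L ^ (1 + a - (2:ℝ)/p)) := by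
        rw [Real.rpow_sub hL0, show (1:ℝ)/p = 1/2 + η by rw [hη]; ring,
          Real.rpow_add hu0]
        ring
    _ ≤ u ^ ((1:ℝ)/2) * (L ^ ((2:ℝ)/p - 1 - a) * L ^ (1 + a - (2:ℝ)/p)) := by
        apply mul_le_mul_of_nonneg_left _ (Real.rpow_nonneg hu0.le _)
        exact mul_le_mul_of_nonneg_right h (Real.rpow_nonneg hL0.le _)
    _ = u ^ ((1:ℝ)/2) := by
        rw [← Real.rpow_add hL0, show (2:ℝ)/p - 1 - a + (1 + a - (2:ℝ)/p) = 0 by ring,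
          Real.rpow_zero, mul_one]

set_option maxHeartbeats 1000000 in
/-- Lower fundamental function estimate for the `ℓ_p`-direct sum
`Y = (⊕ₙ Fₙ)_{ℓ_p}` of finite-dimensional Rosenthal-type spaces. -/
theorem stmt9 (p η K : ℝ) (hp1 : 1 < p) (hp2 : p < 2) (hη : η = 1 / p - 1 / 2)
    (hK : 1 ≤ K)
    (v : ℕ → ℝ) (hv0 : v 0 = 1) (hvdec : ∀ m n : ℕ, m ≤ n → v n ≤ v m)
    (hvpos : ∀ n, 0 < v n) (hvle : ∀ n, v n ≤ 1)
    (hvlow : ∀ n : ℕ, 1 ≤ n → (n : ℝ) ^ (-η) ≤ v n)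
    (Nrm : ℕ → Finset ℕ → ℝ) (hNnonneg : ∀ n B, 0 ≤ Nrm n B)
    (hN : ∀ (n : ℕ) (B : Finset ℕ), B ⊆ Finset.Icc 1 n →
      (1 / K) * min ((B.card : ℝ) ^ (1 / p)) ((B.card : ℝ) ^ ((1 : ℝ) / 2) / v n)
        ≤ Nrm n B)
    (k : ℕ) (hk : 1 ≤ k)
    (A : Finset (ℕ × ℕ)) (hA : ∀ x ∈ A, 1 ≤ x.2 ∧ x.2 ≤ x.1)
    (hcard : k ≤ A.card) :
    (1 / (K * Real.sqrt 2)) *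
        ((Nat.floor (Real.sqrt ((k : ℝ) / 2)) : ℝ) / v (Nat.floor (Real.sqrt ((k : ℝ) / 2))))
      ≤ (∑ n ∈ A.image Prod.fst,
          (Nrm n ((A.filter (fun x => x.1 = n)).image Prod.snd)) ^ p) ^ (1 / p) := by
  classical
  have hp0 : 0 < p := by linarith
  have hK0 : 0 < K := by linarith
  set ℓ := Nat.floor (Real.sqrt ((k : ℝ) / 2)) with hℓdef
  set I := A.image Prod.fst with hI
  set B : ℕ → Finset ℕ := fun n => (A.filter (fun x => x.1 = n)).image Prod.snd with hBdef
  show (1 / (K * Real.sqrt 2)) * ((ℓ : ℝ) / v ℓ) ≤ (∑ n ∈ I, (Nrm n (B n)) ^ p) ^ (1/p)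
  set S := ∑ n ∈ I, (Nrm n (B n)) ^ p with hS
  clear_value B
  have hSnn : 0 ≤ S := Finset.sum_nonneg fun n _ => Real.rpow_nonneg (hNnonneg _ _) p
  rcases Nat.eq_zero_or_pos ℓ with h0 | hℓ1
  · rw [h0]
    simpa using Real.rpow_nonneg hSnn (1/p)
  have hL1 : (1:ℝ) ≤ (ℓ:ℝ) := by exact_mod_cast hℓ1
  set L := (ℓ:ℝ) with hLdef
  have hL0 : (0:ℝ) < L := by linarith
  have hvℓ : 0 < v ℓ := hvpos ℓ
  have hvℓη : L ^ (-η) ≤ v ℓ := hvlow ℓ hℓ1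
  have h12p : (1:ℝ)/2 < 1/p := by
    rw [div_lt_div_iff₀ (by norm_num) hp0]
    linarith
  have hηpos : 0 < η := by rw [hη]; linarith
  have hL2pos : (0:ℝ) < L ^ (2:ℝ) := Real.rpow_pos_of_pos hL0 2
  have hLsqcast : L ^ (2:ℝ) = ((ℓ^2 : ℕ) : ℝ) := by
    push_cast
    rw [← Real.rpow_natCast L 2]
    norm_num
  have hkey : L / v ℓ ≤ L ^ ((2:ℝ)/p) := by
    have h1 : L / v ℓ ≤ L / L ^ (-η) :=
      div_le_div_of_nonneg_left hL0.le (Real.rpow_pos_of_pos hL0 _) hvℓη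
    have h2 : L / L ^ (-η) = L ^ (1 + η) := by
      rw [show (1:ℝ) + η = 1 - (-η) by ring, Real.rpow_sub hL0, Real.rpow_one]
    have h3 : L ^ (1 + η) ≤ L ^ ((2:ℝ)/p) :=
      Real.rpow_le_rpow_of_exponent_le hL1
        (by rw [hη, show (2:ℝ)/p = 2*(1/p) by ring]; linarith)
    calc L / v ℓ ≤ L / L ^ (-η) := h1
      _ = L ^ (1 + η) := h2
      _ ≤ L ^ ((2:ℝ)/p) := h3
  have hL2p : L ^ ((2:ℝ)/p) = (L ^ (2:ℝ)) ^ (1/p) := by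
    rw [← Real.rpow_mul hL0.le]
    congr 1
    ring
  have hk2 : 2 * L ^ (2:ℝ) ≤ (k:ℝ) := by
    have h1 : L ≤ Real.sqrt ((k:ℝ)/2) := Nat.floor_le (Real.sqrt_nonneg _)
    have h2 : L ^ (2:ℝ) ≤ (k:ℝ)/2 := by
      rw [show (2:ℝ) = ((2:ℕ):ℝ) by norm_num, Real.rpow_natCast]
      nlinarith [Real.sq_sqrt (show (0:ℝ) ≤ (k:ℝ)/2 by positivity),
        Real.sqrt_nonneg ((k:ℝ)/2)]
    linarith
  have hcardB : ∀ n, (B n).card = (A.filter (fun x => x.1 = n)).card := by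
    intro n
    rw [hBdef]
    apply Finset.card_image_of_injOn
    intro x hx y hy hxy
    simp only [Finset.coe_filter, Set.mem_setOf_eq] at hx hy
    exact Prod.ext (hx.2.trans hy.2.symm) hxy
  have hsumcard : ∑ n ∈ I, (B n).card = A.card := by
    simp only [hcardB]
    exact (Finset.card_eq_sum_card_image Prod.fst A).symm
  have hBsub : ∀ n, B n ⊆ Finset.Icc 1 n := by
    intro n j hj
    simp only [hBdef, Finset.mem_image, Finset.mem_filter] at hj
    obtain ⟨x, ⟨hxA, hx1⟩, hx2⟩ := hj
    obtain ⟨ha, hb⟩ := hA x hxA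
    exact Finset.mem_Icc.mpr ⟨hx2 ▸ ha, by omega⟩
  have hcard_le : ∀ n, (B n).card ≤ n := by
    intro n
    have := Finset.card_le_card (hBsub n)
    simpa [Nat.card_Icc] using this
  have hBne : ∀ n ∈ I, 1 ≤ (B n).card := by
    intro n hn
    rw [hI] at hn
    obtain ⟨x, hxA, hx1⟩ := Finset.mem_image.mp hn
    have : x.2 ∈ B n := by
      rw [hBdef]
      exact Finset.mem_image.mpr ⟨x, Finset.mem_filter.mpr ⟨hxA, hx1⟩, rfl⟩
    exact Finset.card_pos.mpr ⟨x.2, this⟩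
  have hNn : ∀ n, (1/K) * min (((B n).card:ℝ) ^ (1/p)) (((B n).card:ℝ) ^ ((1:ℝ)/2) / v n)
      ≤ Nrm n (B n) := fun n => hN n (B n) (hBsub n)
  have hsqrt2 : (1:ℝ) ≤ Real.sqrt 2 := by
    rw [show (1:ℝ) = Real.sqrt 1 by simp]
    exact Real.sqrt_le_sqrt (by norm_num)
  have hLHS : (1/(K*Real.sqrt 2)) * (L / v ℓ) ≤ (1/K) * (L / v ℓ) := by
    apply mul_le_mul_of_nonneg_right _ (by positivity)
    exact div_le_div_of_nonneg_left one_pos.le hK0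
      (le_mul_of_one_le_right hK0.le hsqrt2)
  clear_value S
  clear_value I
  clear_value L
  clear_value ℓ
  by_cases hcase : ∃ n ∈ I, ℓ^2 ≤ (B n).card
  · obtain ⟨n₀, hn₀I, hc⟩ := hcase
    have hcR : L ^ (2:ℝ) ≤ ((B n₀).card : ℝ) := by
      rw [hLsqcast]
      exact_mod_cast hc
    have hnℓ : ℓ ≤ n₀ :=
      le_trans (Nat.le_self_pow two_ne_zero ℓ) (le_trans hc (hcard_le n₀))
    have hmin : L / v ℓ
        ≤ min (((B n₀).card:ℝ) ^ (1/p)) (((B n₀).card:ℝ) ^ ((1:ℝ)/2) / v n₀) := by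
      refine le_min ?_ ?_
      · calc L / v ℓ ≤ L ^ ((2:ℝ)/p) := hkey
          _ = (L ^ (2:ℝ)) ^ (1/p) := hL2p
          _ ≤ ((B n₀).card:ℝ) ^ (1/p) :=
            Real.rpow_le_rpow hL2pos.le hcR (by positivity)
      · have h1 : L ≤ ((B n₀).card:ℝ) ^ ((1:ℝ)/2) := by
          calc L = (L ^ (2:ℝ)) ^ ((1:ℝ)/2) := by
                rw [← Real.rpow_mul hL0.le]
                norm_num
            _ ≤ ((B n₀).card:ℝ) ^ ((1:ℝ)/2) :=
              Real.rpow_le_rpow hL2pos.le hcR (by norm_num)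
        calc L / v ℓ ≤ ((B n₀).card:ℝ) ^ ((1:ℝ)/2) / v ℓ := by gcongr
          _ ≤ ((B n₀).card:ℝ) ^ ((1:ℝ)/2) / v n₀ :=
            div_le_div_of_nonneg_left (by positivity) (hvpos n₀) (hvdec ℓ n₀ hnℓ)
    calc (1/(K*Real.sqrt 2)) * (L / v ℓ) ≤ (1/K) * (L / v ℓ) := hLHS
      _ ≤ (1/K) * min (((B n₀).card:ℝ) ^ (1/p)) (((B n₀).card:ℝ) ^ ((1:ℝ)/2) / v n₀) :=
        mul_le_mul_of_nonneg_left hmin (by positivity)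
      _ ≤ Nrm n₀ (B n₀) := hNn n₀
      _ = ((Nrm n₀ (B n₀)) ^ p) ^ (1/p) := by
        rw [← Real.rpow_mul (hNnonneg _ _), mul_one_div_cancel hp0.ne', Real.rpow_one]
      _ ≤ S ^ (1/p) := by
        rw [hS]
        exact Real.rpow_le_rpow (Real.rpow_nonneg (hNnonneg _ _) p)
          (Finset.single_le_sum (f := fun i => Nrm i (B i) ^ p)
            (fun i _ => Real.rpow_nonneg (hNnonneg _ _) p) hn₀I)
          (by positivity)
  · push_neg at hcase
    have hterm : ∀ n ∈ I,
        (((B n).card:ℝ) / (2 * L ^ (2:ℝ))) * ((1/K) * (L / v ℓ)) ^ p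
          ≤ (Nrm n (B n)) ^ p := by
      intro n hnI
      set c := ((B n).card : ℝ) with hc
      have hc1 : (1:ℝ) ≤ c := by rw [hc]; exact_mod_cast hBne n hnI
      have hc0 : (0:ℝ) < c := by linarith
      have hcℓ2 : c ≤ L ^ (2:ℝ) := by
        rw [hLsqcast, hc]
        exact_mod_cast (hcase n hnI).le
      have hT : (c / (2 * L ^ (2:ℝ))) ^ (1/p) * (L / v ℓ)
          ≤ min (c ^ (1/p)) (c ^ ((1:ℝ)/2) / v n) := by
        refine le_min ?_ ?_
        · have hfrac : L / v ℓ ≤ (2 * L ^ (2:ℝ)) ^ (1/p) := by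
            calc L / v ℓ ≤ L ^ ((2:ℝ)/p) := hkey
              _ = (L ^ (2:ℝ)) ^ (1/p) := hL2p
              _ ≤ (2 * L ^ (2:ℝ)) ^ (1/p) :=
                Real.rpow_le_rpow hL2pos.le (by linarith) (by positivity)
          calc (c / (2 * L ^ (2:ℝ))) ^ (1/p) * (L / v ℓ)
              ≤ (c / (2 * L ^ (2:ℝ))) ^ (1/p) * (2 * L ^ (2:ℝ)) ^ (1/p) :=
                mul_le_mul_of_nonneg_left hfrac (by positivity)
            _ = c ^ (1/p) := by
                rw [← Real.mul_rpow (by positivity) (by positivity),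
                  div_mul_cancel₀ _ (by positivity : (2 * L ^ (2:ℝ)) ≠ 0)]
        · by_cases hnℓ : ℓ ≤ n
          · have hexp : c ^ η ≤ L ^ ((2:ℝ)/p - 1 - 0) := by
              have h1 : c ^ η ≤ (L ^ (2:ℝ)) ^ η :=
                Real.rpow_le_rpow hc0.le hcℓ2 hηpos.le
              have h2 : (L ^ (2:ℝ)) ^ η = L ^ ((2:ℝ)/p - 1 - 0) := by
                rw [← Real.rpow_mul hL0.le]
                congr 1
                rw [hη]
                field_simp
                ring
              linarith [h2 ▸ h1]
            have haux := aux9 p η 0 c L hp1 hp2 hη hc1 hL1 hexp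
            rw [add_zero, Real.rpow_one] at haux
            calc (c / (2 * L ^ (2:ℝ))) ^ (1/p) * (L / v ℓ)
                = ((c / (2 * L ^ (2:ℝ))) ^ (1/p) * L) / v ℓ := by ring
              _ ≤ c ^ ((1:ℝ)/2) / v ℓ := by gcongr
              _ ≤ c ^ ((1:ℝ)/2) / v n :=
                div_le_div_of_nonneg_left (by positivity) (hvpos n) (hvdec ℓ n hnℓ)
          · push_neg at hnℓ
            have hcL : c ≤ L := by
              have h1 : (B n).card ≤ n := hcard_le n
              have h2 : (n:ℝ) ≤ L := by rw [hLdef]; exact_mod_cast hnℓ.le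
              calc c ≤ (n:ℝ) := by rw [hc]; exact_mod_cast h1
                _ ≤ L := h2
            have hexp : c ^ η ≤ L ^ ((2:ℝ)/p - 1 - η) := by
              have h1 : c ^ η ≤ L ^ η := Real.rpow_le_rpow hc0.le hcL hηpos.le
              have h2 : ((2:ℝ)/p - 1 - η) = η := by rw [hη]; field_simp; ring
              rw [h2]
              exact h1
            have haux := aux9 p η η c L hp1 hp2 hη hc1 hL1 hexp
            have hLv : L / v ℓ ≤ L ^ (1 + η) := by
              calc L / v ℓ ≤ L / L ^ (-η) :=
                    div_le_div_of_nonneg_left hL0.le (Real.rpow_pos_of_pos hL0 _) hvℓη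
                _ = L ^ (1 + η) := by
                    rw [show (1:ℝ) + η = 1 - (-η) by ring, Real.rpow_sub hL0,
                      Real.rpow_one]
            calc (c / (2 * L ^ (2:ℝ))) ^ (1/p) * (L / v ℓ)
                ≤ (c / (2 * L ^ (2:ℝ))) ^ (1/p) * L ^ (1 + η) :=
                  mul_le_mul_of_nonneg_left hLv (by positivity)
              _ ≤ c ^ ((1:ℝ)/2) := haux
              _ ≤ c ^ ((1:ℝ)/2) / v n := by
                  rw [le_div_iff₀ (hvpos n)]
                  nlinarith [Real.rpow_nonneg hc0.le ((1:ℝ)/2), hvle n, hvpos n]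
      have hT2 : (1/K) * ((c / (2 * L ^ (2:ℝ))) ^ (1/p) * (L / v ℓ)) ≤ Nrm n (B n) :=
        le_trans (mul_le_mul_of_nonneg_left hT (by positivity)) (hNn n)
      have hmono := Real.rpow_le_rpow (by positivity) hT2 hp0.le
      rw [show (1/K) * ((c / (2 * L ^ (2:ℝ))) ^ (1/p) * (L / v ℓ))
            = (c / (2 * L ^ (2:ℝ))) ^ (1/p) * ((1/K) * (L / v ℓ)) by ring,
        Real.mul_rpow (by positivity) (by positivity),
        ← Real.rpow_mul (by positivity), one_div_mul_cancel hp0.ne',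
        Real.rpow_one] at hmono
      exact hmono
    have hsum2 : ((1/K) * (L / v ℓ)) ^ p ≤ S := by
      have h1 : ∑ n ∈ I, (((B n).card:ℝ) / (2 * L ^ (2:ℝ))) * ((1/K) * (L / v ℓ)) ^ p
          ≤ S := by rw [hS]; exact Finset.sum_le_sum hterm
      have h2 : ∑ n ∈ I, (((B n).card:ℝ) / (2 * L ^ (2:ℝ))) * ((1/K) * (L / v ℓ)) ^ p
          = ((A.card:ℝ) / (2 * L ^ (2:ℝ))) * ((1/K) * (L / v ℓ)) ^ p := by
        rw [← Finset.sum_mul, ← Finset.sum_div]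
        congr 2
        rw [← Nat.cast_sum, hsumcard]
      have h3 : 1 ≤ (A.card:ℝ) / (2 * L ^ (2:ℝ)) := by
        rw [le_div_iff₀ (by positivity)]
        have : (k:ℝ) ≤ (A.card:ℝ) := by exact_mod_cast hcard
        linarith
      have h4 : 0 ≤ ((1/K) * (L / v ℓ)) ^ p := Real.rpow_nonneg (by positivity) p
      calc ((1/K) * (L / v ℓ)) ^ p = 1 * ((1/K) * (L / v ℓ)) ^ p := (one_mul _).symm
        _ ≤ ((A.card:ℝ) / (2 * L ^ (2:ℝ))) * ((1/K) * (L / v ℓ)) ^ p :=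
          mul_le_mul_of_nonneg_right h3 h4
        _ ≤ S := by rw [← h2]; exact h1
    calc (1/(K*Real.sqrt 2)) * (L / v ℓ) ≤ (1/K) * (L / v ℓ) := hLHS
      _ = (((1/K) * (L / v ℓ)) ^ p) ^ (1/p) := by
        rw [← Real.rpow_mul (by positivity), mul_one_div_cancel hp0.ne', Real.rpow_one]
      _ ≤ S ^ (1/p) :=
        Real.rpow_le_rpow (Real.rpow_nonneg (by positivity) p) hsum2 (by positivity)
end

section
/- Combinatorial core of the lower fundamental function estimate: let (v_n) be decreasing in (0,1], let (a_n) be nonnegative integers with a_n ≤ n for all n and ∑_n a_n ≥ ℓ², where ℓ ∈ ℕ. Then ∑_n a_n/v_n² ≥ ℓ²/(2 v_ℓ²). -/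
/-- Combinatorial core of the lower fundamental function estimate. -/
theorem stmt10 (v : ℕ → ℝ) (hvpos : ∀ n, 0 < v n) (hvle : ∀ n, v n ≤ 1)
    (hvdec : ∀ m n : ℕ, m ≤ n → v n ≤ v m)
    (ℓ : ℕ) (hℓ : 1 ≤ ℓ) (a : ℕ → ℕ) (ha : ∀ n, a n ≤ n)
    (S : Finset ℕ) (hS : ∀ n ∈ S, 1 ≤ n)
    (hsum : (ℓ : ℝ) ^ 2 ≤ ∑ n ∈ S, (a n : ℝ)) :
    (ℓ : ℝ) ^ 2 / (2 * (v ℓ) ^ 2) ≤ ∑ n ∈ S, (a n : ℝ) / (v n) ^ 2 := by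
  classical
  set S1 := S.filter (fun n => n < ℓ) with hS1
  set S2 := S.filter (fun n => ¬ n < ℓ) with hS2
  have hvl2 : (0:ℝ) < (v ℓ)^2 := pow_pos (hvpos ℓ) 2
  -- bound sum over S1
  have h1 : ∑ n ∈ S1, (a n : ℝ) ≤ (ℓ:ℝ)^2 / 2 := by
    have hsub : S1 ⊆ Finset.range ℓ := by
      intro n hn
      simp only [hS1, Finset.mem_filter] at hn
      exact Finset.mem_range.2 hn.2
    have hgauss : (∑ n ∈ Finset.range ℓ, (n : ℝ)) * 2 = (ℓ:ℝ) * ((ℓ:ℝ) - 1) := by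
      have := Finset.sum_range_id_mul_two ℓ
      have := congrArg (fun k : ℕ => (k : ℝ)) this
      push_cast [Nat.cast_sub hℓ] at this
      convert this using 2
    calc ∑ n ∈ S1, (a n : ℝ) ≤ ∑ n ∈ S1, (n : ℝ) := by
          apply Finset.sum_le_sum
          intro n _
          exact_mod_cast ha n
      _ ≤ ∑ n ∈ Finset.range ℓ, (n : ℝ) := by
          apply Finset.sum_le_sum_of_subset_of_nonneg hsub
          intro n _ _
          positivity
      _ ≤ (ℓ:ℝ)^2 / 2 := by
          have hc : (1:ℝ) ≤ (ℓ:ℝ) := by exact_mod_cast hℓ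
          nlinarith
  -- sum over S2 is at least ℓ²/2
  have hsplit : ∑ n ∈ S, (a n : ℝ) = ∑ n ∈ S1, (a n : ℝ) + ∑ n ∈ S2, (a n : ℝ) := by
    rw [hS1, hS2]
    exact (Finset.sum_filter_add_sum_filter_not S _ _).symm
  have h2 : (ℓ:ℝ)^2 / 2 ≤ ∑ n ∈ S2, (a n : ℝ) := by linarith
  -- comparison
  have h3 : ∑ n ∈ S2, (a n : ℝ) / (v ℓ)^2 ≤ ∑ n ∈ S2, (a n : ℝ) / (v n)^2 := by
    apply Finset.sum_le_sum
    intro n hn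
    simp only [hS2, Finset.mem_filter, not_lt] at hn
    have hv : v n ≤ v ℓ := hvdec ℓ n hn.2
    have hvn := hvpos n
    apply div_le_div_of_nonneg_left (by positivity) (by positivity)
    nlinarith [hvpos ℓ]
  have h4 : ∑ n ∈ S2, (a n : ℝ) / (v n)^2 ≤ ∑ n ∈ S, (a n : ℝ) / (v n)^2 := by
    apply Finset.sum_le_sum_of_subset_of_nonneg (Finset.filter_subset _ _)
    intro n _ _
    positivity
  have h5 : (ℓ:ℝ)^2 / (2 * (v ℓ)^2) ≤ ∑ n ∈ S2, (a n : ℝ) / (v ℓ)^2 := by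
    rw [← Finset.sum_div]
    rw [div_le_div_iff₀ (by positivity) (by positivity)]
    nlinarith
  linarith
end

section
/- Let m ∈ ℕ and B : ℓ_∞^m → ℓ_1 a linear operator with ‖B‖ ≤ 1, written as a matrix (B(j,i)). Then (1/m)∑_{i=1}^m max_j |B(j,i)| ≤ K_G/√m, where K_G is the Grothendieck constant. In particular, if ‖B_m‖ ≤ 1 for a sequence of operators B_m : ℓ_∞^m → ℓ_1, then (1/m)∑_{i=1}^m ‖B_m e_i‖_∞ → 0 as m → ∞. -/
/-- Grothendieck-type estimate: if `B : ℓ_∞^m → ℓ_1^J` has norm at most `1`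
and `K_G` satisfies the Grothendieck inequality for `B`, then
`(1/m) ∑_i max_j |B(j,i)| ≤ K_G / √m`. -/
theorem stmt11 (m J : ℕ) (hm : 0 < m) (hJ : 0 < J) (KG : ℝ)
    (B : Fin J → Fin m → ℝ)
    (hB : ∀ (s : Fin m → ℝ) (t : Fin J → ℝ), (∀ i, |s i| ≤ 1) → (∀ j, |t j| ≤ 1) →
      ∑ i, ∑ j, t j * B j i * s i ≤ 1)
    (hKG : ∀ (H : Type) [NormedAddCommGroup H] [InnerProductSpace ℝ H]
      (x : Fin m → H) (y : Fin J → H), (∀ i, ‖x i‖ ≤ 1) → (∀ j, ‖y j‖ ≤ 1) →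
      ∑ i, ∑ j, B j i * (inner ℝ (y j) (x i) : ℝ) ≤ KG) :
    (1 / (m : ℝ)) * ∑ i,
        (Finset.univ.sup' ⟨(⟨0, hJ⟩ : Fin J), Finset.mem_univ _⟩ fun j => |B j i|)
      ≤ KG / Real.sqrt m := by
  have hmpos : (0 : ℝ) < m := by exact_mod_cast hm
  have hsq : (0 : ℝ) < Real.sqrt m := Real.sqrt_pos.mpr hmpos
  -- choose maximizers
  have hmax : ∀ i : Fin m, ∃ j : Fin J,
      (Finset.univ.sup' ⟨(⟨0, hJ⟩ : Fin J), Finset.mem_univ _⟩ fun j => |B j i|) = |B j i| := by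
    intro i
    obtain ⟨j, _, hj⟩ := Finset.exists_mem_eq_sup' ⟨(⟨0, hJ⟩ : Fin J), Finset.mem_univ _⟩
      (fun j => |B j i|)
    exact ⟨j, hj⟩
  choose f hf using hmax
  set s : Fin m → ℝ := fun i => if 0 ≤ B (f i) i then 1 else -1 with hs
  have hs1 : ∀ i, s i = 1 ∨ s i = -1 := by
    intro i; by_cases h : 0 ≤ B (f i) i <;> simp [hs, h]
  have hssq : ∀ i, s i * s i = 1 := by
    intro i; rcases hs1 i with h | h <;> rw [h] <;> norm_num
  have hsB : ∀ i, s i * B (f i) i = |B (f i) i| := by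
    intro i
    by_cases h : 0 ≤ B (f i) i
    · simp [hs, h, abs_of_nonneg h]
    · push_neg at h
      simp [hs, not_le.mpr h, abs_of_neg h]
  -- Hilbert space vectors
  set x : Fin m → EuclideanSpace ℝ (Fin m) := fun i => EuclideanSpace.single i (1 : ℝ) with hx
  set y : Fin J → EuclideanSpace ℝ (Fin m) := fun j =>
    (WithLp.equiv 2 (Fin m → ℝ)).symm (fun i => if f i = j then s i / Real.sqrt m else 0) with hy
  have hxnorm : ∀ i, ‖x i‖ ≤ 1 := by
    intro i
    simp [hx, EuclideanSpace.norm_single]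
  have hynorm : ∀ j, ‖y j‖ ≤ 1 := by
    intro j
    rw [hy]
    rw [EuclideanSpace.norm_eq]
    rw [show (1 : ℝ) = Real.sqrt 1 by simp]
    apply Real.sqrt_le_sqrt
    calc ∑ i, ‖(if f i = j then s i / Real.sqrt m else 0)‖ ^ 2
        ≤ ∑ _i : Fin m, (1 / m : ℝ) := by
          apply Finset.sum_le_sum
          intro i _
          have hsq2 : (s i / Real.sqrt m) ^ 2 = 1 / m := by
            rw [div_pow, Real.sq_sqrt hmpos.le]
            rcases hs1 i with h | h <;> rw [h] <;> norm_num
          by_cases h : f i = j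
          · rw [if_pos h, Real.norm_eq_abs, sq_abs, hsq2]
          · simp [h, le_of_lt (by positivity : (0:ℝ) < 1 / m)]
      _ = 1 := by
          rw [Finset.sum_const, Finset.card_univ, Fintype.card_fin, nsmul_eq_mul]
          field_simp
  have key := hKG (EuclideanSpace ℝ (Fin m)) x y hxnorm hynorm
  have hinner : ∀ (i : Fin m) (j : Fin J),
      (inner ℝ (y j) (x i) : ℝ) = if f i = j then s i / Real.sqrt m else 0 := by
    intro i j
    rw [hx, hy]
    rw [EuclideanSpace.inner_single_right]
    simp
  have hsum : ∑ i, ∑ j, B j i * (inner ℝ (y j) (x i) : ℝ)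
      = (∑ i, |B (f i) i|) / Real.sqrt m := by
    rw [Finset.sum_div]
    apply Finset.sum_congr rfl
    intro i _
    simp only [hinner, mul_ite, mul_zero]
    rw [Finset.sum_ite_eq Finset.univ (f i) (fun j => B j i * (s i / Real.sqrt m))]
    simp only [Finset.mem_univ, if_pos]
    rw [← hsB i]
    ring
  rw [hsum] at key
  -- conclude
  have hS : ∑ i, (Finset.univ.sup' ⟨(⟨0, hJ⟩ : Fin J), Finset.mem_univ _⟩ fun j => |B j i|)
      = ∑ i, |B (f i) i| := Finset.sum_congr rfl fun i _ => hf i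
  rw [hS, one_div, inv_mul_eq_div, div_le_div_iff₀ hmpos hsq]
  have h1 : (∑ i, |B (f i) i|) ≤ KG * Real.sqrt m := (div_le_iff₀ hsq).mp key
  calc (∑ i, |B (f i) i|) * Real.sqrt m ≤ KG * Real.sqrt m * Real.sqrt m :=
      mul_le_mul_of_nonneg_right h1 hsq.le
    _ = KG * m := by rw [mul_assoc, Real.mul_self_sqrt hmpos.le]
end

section
/- Growth-rate separation of the interleaved weight sequences: fix η > 0 and f(n) = n^{−η}. For an infinite set M = {m_1 < m_2 < ⋯} ⊆ ℕ define the nonincreasing sequence w_M on ℕ by w_M(1) = 1, w_M(2^{3^{m_k}}) = f(2^k) = 2^{−ηk}, extended by linear interpolation. If M ⊆ N ⊆ ℕ with N∖M infinite, then w_N(n^{1/3})/w_M(n) → 0 as n → ∞ (where w(x) := w(⌊x⌋)). -/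
open Filter Nat Finset

/-- Growth-rate separation of the interleaved weight sequences:
if `N \ M` is infinite then `w_N(n^{1/3}) / w_M(n) → 0`. -/
theorem stmt18 (η : ℝ) (hη : 0 < η) (M N : Set ℕ)
    (hMN : M ⊆ N) (hM : M.Infinite) (hNM : (N \ M).Infinite)
    (wM wN : ℕ → ℝ)
    (hwMpos : ∀ n, 0 < wM n) (hwNpos : ∀ n, 0 < wN n)
    (hwMle : ∀ n, wM n ≤ 1) (hwNle : ∀ n, wN n ≤ 1)
    (hwM1 : wM 1 = 1) (hwN1 : wN 1 = 1)
    (hwMmono : ∀ a b : ℕ, a ≤ b → wM b ≤ wM a)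
    (hwNmono : ∀ a b : ℕ, a ≤ b → wN b ≤ wN a)
    (hwManchor : ∀ k : ℕ, wM (2 ^ 3 ^ (Nat.nth (· ∈ M) k)) = (2 : ℝ) ^ (-η * (k + 1)))
    (hwNanchor : ∀ k : ℕ, wN (2 ^ 3 ^ (Nat.nth (· ∈ N) k)) = (2 : ℝ) ^ (-η * (k + 1))) :
    Filter.Tendsto (fun n : ℕ => wN (Nat.floor ((n : ℝ) ^ ((1 : ℝ) / 3))) / wM n)
      Filter.atTop (nhds 0) := by
  classical
  have hMinf : (setOf (· ∈ M)).Infinite := by exact hM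
  have hNinf : (setOf (· ∈ N)).Infinite := by exact hM.mono hMN
  have hRinf : (setOf (· ∈ N \ M)).Infinite := by exact hNM
  set m : ℕ → ℕ := Nat.nth (· ∈ M) with hmdef
  have hmmono : StrictMono m := Nat.nth_strictMono hMinf
  have hmj : ∀ j, j ≤ m j := fun j => hmmono.le_apply
  have haux : ∀ j, j < 2 ^ 3 ^ (m j) := by
    intro j
    calc j ≤ m j := hmj j
      _ < 3 ^ (m j) := Nat.lt_pow_self (n := m j) (by norm_num)
      _ < 2 ^ 3 ^ (m j) := Nat.lt_pow_self (n := 3 ^ (m j)) (by norm_num)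
  -- counting claim: eventually nth N (k+l+1) < m k
  have hcount : ∀ l : ℕ, ∃ K, ∀ k ≥ K, Nat.nth (· ∈ N) (k + l + 1) < m k := by
    intro l
    set t := Nat.nth (· ∈ N \ M) (l + 1) with ht
    refine ⟨t + 1, fun k hk => ?_⟩
    apply Nat.nth_lt_of_lt_count
    have hsub : ((range k).image m ∪ (range (l + 2)).image (Nat.nth (· ∈ N \ M)))
        ⊆ (range (m k)).filter (· ∈ N) := by
      intro x hx
      simp only [mem_union, mem_image, mem_range] at hx
      rcases hx with ⟨j, hj, rfl⟩ | ⟨j, hj, rfl⟩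
      · exact mem_filter.2 ⟨mem_range.2 (hmmono hj), hMN (Nat.nth_mem_of_infinite hMinf j)⟩
      · refine mem_filter.2 ⟨mem_range.2 ?_, (Nat.nth_mem_of_infinite hRinf j).1⟩
        have h1 : Nat.nth (· ∈ N \ M) j ≤ t :=
          (Nat.nth_strictMono hRinf).monotone (by omega)
        have h2 := hmj k
        omega
    have hdisj : Disjoint ((range k).image m)
        ((range (l + 2)).image (Nat.nth (· ∈ N \ M))) := by
      rw [Finset.disjoint_left]
      rintro x hx1 hx2
      simp only [mem_image, mem_range] at hx1 hx2
      obtain ⟨j, _, rfl⟩ := hx1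
      obtain ⟨i, _, hi⟩ := hx2
      have h1 : m j ∈ M := Nat.nth_mem_of_infinite hMinf j
      have h2 := Nat.nth_mem_of_infinite hRinf i
      rw [hi] at h2
      exact h2.2 h1
    have hcard : k + (l + 2) ≤ #((range (m k)).filter (· ∈ N)) := by
      have hcc := Finset.card_le_card hsub
      rwa [Finset.card_union_of_disjoint hdisj,
        Finset.card_image_of_injective _ (Nat.nth_injective hMinf),
        Finset.card_image_of_injective _ (Nat.nth_injective hRinf),
        Finset.card_range, Finset.card_range] at hcc
    rw [Nat.count_eq_card_filter_range]
    omega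
  rw [Metric.tendsto_atTop]
  intro ε hε
  obtain ⟨l, hl⟩ : ∃ l : ℕ, ((2 : ℝ) ^ (-η)) ^ l < ε :=
    exists_pow_lt_of_lt_one hε
      (Real.rpow_lt_one_of_one_lt_of_neg (by norm_num) (neg_neg_of_pos hη))
  have hll : ((2 : ℝ) ^ (-η)) ^ l = (2 : ℝ) ^ (-η * l) := by
    rw [← Real.rpow_natCast ((2 : ℝ) ^ (-η)) l, ← Real.rpow_mul (by norm_num)]
  obtain ⟨K, hK⟩ := hcount l
  set K' := max K 1 with hK'
  refine ⟨2 ^ 3 ^ (m K'), fun n hn => ?_⟩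
  set P : ℕ → Prop := fun j => 2 ^ 3 ^ (m j) ≤ n with hPdef
  set k := Nat.findGreatest P n with hkdef
  have hK'n : K' ≤ n := le_trans (le_of_lt (haux K')) hn
  have hkK' : K' ≤ k := Nat.le_findGreatest hK'n hn
  have hPk : 2 ^ 3 ^ (m k) ≤ n := Nat.findGreatest_spec (P := P) hK'n hn
  have hnk1 : n < 2 ^ 3 ^ (m (k + 1)) := by
    by_cases h : k + 1 ≤ n
    · have h2 := Nat.findGreatest_is_greatest (P := P) (Nat.lt_succ_self k) h
      exact Nat.lt_of_not_le h2
    · exfalso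
      exact absurd ((haux k).trans_le hPk) (by omega)
  have hk1 : 1 ≤ k := le_trans (le_max_right K 1) hkK'
  have hkK : K ≤ k := le_trans (le_max_left K 1) hkK'
  have hNk : Nat.nth (· ∈ N) (k + l + 1) < m k := hK k hkK
  have hmk1 : 1 ≤ m k := le_trans hk1 (hmj k)
  -- floor bound
  have hfloor : 2 ^ 3 ^ (m k - 1) ≤ Nat.floor ((n : ℝ) ^ ((1 : ℝ) / 3)) := by
    apply Nat.le_floor
    have h3 : (((2 : ℕ) ^ 3 ^ (m k - 1) : ℕ) : ℝ) ^ (3 : ℕ) ≤ (n : ℝ) := by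
      push_cast
      rw [← pow_mul]
      have h4 : 3 ^ (m k - 1) * 3 = 3 ^ (m k) := by
        rw [← pow_succ]
        congr 1
        omega
      rw [h4]
      exact_mod_cast hPk
    calc (((2 : ℕ) ^ 3 ^ (m k - 1) : ℕ) : ℝ)
        = (((((2 : ℕ) ^ 3 ^ (m k - 1) : ℕ) : ℝ)) ^ (3 : ℕ)) ^ ((1 : ℝ) / 3) := by
          rw [← Real.rpow_natCast ((((2 : ℕ) ^ 3 ^ (m k - 1) : ℕ) : ℝ)) 3,
            ← Real.rpow_mul (by positivity)]
          norm_num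
      _ ≤ (n : ℝ) ^ ((1 : ℝ) / 3) :=
          Real.rpow_le_rpow (by positivity) h3 (by norm_num)
  have hle1 : 2 ^ 3 ^ (Nat.nth (· ∈ N) (k + l + 1)) ≤ 2 ^ 3 ^ (m k - 1) :=
    Nat.pow_le_pow_right (by norm_num) (Nat.pow_le_pow_right (by norm_num) (by omega))
  have hwNb : wN (Nat.floor ((n : ℝ) ^ ((1 : ℝ) / 3))) ≤ (2 : ℝ) ^ (-η * (k + l + 2)) := by
    have h5 := hwNmono _ _ (le_trans hle1 hfloor)
    rw [hwNanchor (k + l + 1)] at h5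
    convert h5 using 2
    push_cast
    ring
  have hwMb : (2 : ℝ) ^ (-η * (k + 2)) ≤ wM n := by
    have h6 := hwMmono n _ (le_of_lt hnk1)
    rw [hwManchor (k + 1)] at h6
    convert h6 using 2
    push_cast
    ring
  have hratio : wN (Nat.floor ((n : ℝ) ^ ((1 : ℝ) / 3))) / wM n
      ≤ (2 : ℝ) ^ (-η * (k + l + 2)) / (2 : ℝ) ^ (-η * (k + 2)) :=
    div_le_div₀ (by positivity) hwNb (Real.rpow_pos_of_pos (by norm_num) _) hwMb
  have heq : (2 : ℝ) ^ (-η * (k + l + 2)) / (2 : ℝ) ^ (-η * (k + 2)) = (2 : ℝ) ^ (-η * l) := by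
    rw [← Real.rpow_sub (by norm_num)]
    congr 1
    ring
  rw [Real.dist_eq, sub_zero, abs_of_pos (div_pos (hwNpos _) (hwMpos _))]
  calc wN (Nat.floor ((n : ℝ) ^ ((1 : ℝ) / 3))) / wM n
      ≤ (2 : ℝ) ^ (-η * l) := heq ▸ hratio
    _ < ε := hll ▸ hl
end
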